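/- For every (z₁,z₂,z₃) ∈ ℍ³, the point ψ(z₁,z₂,z₃) lies in 𝒰, and the gradient ∇S vanishes at ψ(z₁,z₂,z₃) if and only if the three equations (E1) Log z₃ = Log z₁″ + Log z₂′, (E2) Log z₃ = Log z₁ - Log z₂″, and (E3) Log z₁ + Log z₂′ + 3·Log z₃′ = 2πi hold. -/

import Mathlib

/-!
Differentiating under the integral sign (the `w`-derivative `-(1 - w t)⁻¹` of the integrand is
bounded on a compact neighbourhood of `w` times `[0, 1]`) gives `Li₂'(w) = -Log(1 - w)/w` off
`[1, ∞)`, hence `d/dy Li₂(-e^y) = -Log(1 + e^y)`. At `ψ(z)` one has `1 + e^{ψ₁} = 1 - z₁`,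
`1 + e^{ψ₂} = z₂″` and `1 + e^{ψ₃} = 1 - z₃`, so each partial derivative of `S` is `i` times a
linear combination of `Log zₖ`, `Log(1 - zₖ)`, `Log z₂″` and `πi`. On `ℍ`,
`Log z″ = Log(1 - z) - Log z + πi` and `Log z′ = -Log(1 - z)`; with these, `∂₂S = 0` is (E2), and
modulo (E2), `∂₁S = 0` is (E1) and `∂₃S = 0` is (E3).
-/

open Real

/-- The dilogarithm `Li₂(z) = -∫₀¹ Log(1 - z t)/t dt`. -/
noncomputable def Li2 (z : ℂ) : ℂ :=
  -∫ t in (0:ℝ)..1, Complex.log (1 - z * (t : ℂ)) / (t : ℂ)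

/-- The potential function `S`. -/
noncomputable def pot (y₁ y₂ y₃ : ℂ) : ℂ :=
  Complex.I * (y₁ ^ 2 - y₁ * y₂ + y₂ * y₃ + y₃ ^ 2 / 2) +
    (-(π : ℂ) * y₁ + (π : ℂ) * y₃) +
    Complex.I * Li2 (-Complex.exp y₁) - Complex.I * Li2 (-Complex.exp y₂) +
    3 * Complex.I * Li2 (-Complex.exp y₃)

/-- First/third component of `ψ`: `Log z - iπ`. -/
noncomputable def psiP (z : ℂ) : ℂ := Complex.log z - (π : ℂ) * Complex.I

/-- Second component of `ψ`: `-(Log z - iπ)`. -/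
noncomputable def psiM (z : ℂ) : ℂ := -(Complex.log z - (π : ℂ) * Complex.I)

open Complex MeasureTheory Set Filter
open scoped Interval

lemma one_sub_mul_ofReal_mem_slitPlane {w : ℂ} (hw : 1 - w ∈ slitPlane) {t : ℝ}
    (ht : t ∈ Icc (0 : ℝ) 1) : 1 - w * t ∈ slitPlane := by
  have := starConvex_one_slitPlane.add_smul_mem (by rwa [← sub_eq_add_neg]) ht.1 ht.2
  rwa [real_smul, mul_neg, ← sub_eq_add_neg, mul_comm] at this

/-- The integrand of `Li2 w` is the difference quotient at `0` of `t ↦ log (1 - w t)`, which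
extends continuously to `t = 0`. -/
lemma intervalIntegrable_log_one_sub_mul_div {w : ℂ} (hw : 1 - w ∈ slitPlane) :
    IntervalIntegrable (fun t : ℝ => log (1 - w * t) / t) volume 0 1 := by
  set f : ℝ → ℂ := fun t => log (1 - w * t)
  have hs : {t : ℝ | 1 - w * t ∈ slitPlane} ∈ nhds (0 : ℝ) :=
    (isOpen_slitPlane.preimage (by fun_prop)).mem_nhds (by simp [one_mem_slitPlane])
  have hf : ContinuousOn f {t : ℝ | 1 - w * t ∈ slitPlane} :=
    ContinuousOn.clog (by fun_prop) fun _ ht => ht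
  have hd : DifferentiableAt ℝ f 0 :=
    ((((hasDerivAt_id (0 : ℂ)).const_mul w).const_sub 1).clog (by simp [one_mem_slitPlane])
      |>.comp_ofReal).differentiableAt
  have hcont : ContinuousOn (dslope f 0) (Icc 0 1) :=
    ((continuousOn_dslope hs).2 ⟨hf, hd⟩).mono fun _ ht => one_sub_mul_ofReal_mem_slitPlane hw ht
  refine (hcont.intervalIntegrable_of_Icc zero_le_one).congr fun t ht => ?_
  rw [uIoc_of_le zero_le_one] at ht
  simp [dslope_of_ne _ ht.1.ne', slope_def_module, f, div_eq_inv_mul]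

lemma hasDerivAt_Li2_integral {w : ℂ} (hw : 1 - w ∈ slitPlane) :
    HasDerivAt Li2 (∫ t in (0 : ℝ)..1, (1 - w * t)⁻¹) w := by
  have hV : IsOpen {x : ℂ | 1 - x ∈ slitPlane} := isOpen_slitPlane.preimage (by fun_prop)
  obtain ⟨K, hK, hKV, hKc⟩ := local_compact_nhds (hV.mem_nhds hw)
  have hslit : ∀ x ∈ K, ∀ t ∈ Icc (0 : ℝ) 1, 1 - x * t ∈ slitPlane := fun x hx t ht =>
    one_sub_mul_ofReal_mem_slitPlane (hKV hx) ht
  obtain ⟨C, hC⟩ := (hKc.prod isCompact_Icc).exists_bound_of_continuousOn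
    (f := fun p : ℂ × ℝ => (1 - p.1 * p.2)⁻¹)
    (ContinuousOn.inv₀ (by fun_prop) fun p hp => slitPlane_ne_zero (hslit p.1 hp.1 p.2 hp.2))
  have hbound : ∀ᵐ t : ℝ, t ∈ Ι (0 : ℝ) 1 → ∀ x ∈ K, ‖-(1 - x * t)⁻¹‖ ≤ C := by
    refine Eventually.of_forall fun t ht x hx => ?_
    rw [uIoc_of_le zero_le_one] at ht
    simpa using hC (x, t) ⟨hx, Ioc_subset_Icc_self ht⟩
  have hdiff : ∀ᵐ t : ℝ, t ∈ Ι (0 : ℝ) 1 → ∀ x ∈ K,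
      HasDerivAt (fun x : ℂ => log (1 - x * t) / t) (-(1 - x * t)⁻¹) x := by
    refine Eventually.of_forall fun t ht x hx => ?_
    rw [uIoc_of_le zero_le_one] at ht
    have ht₀ : (t : ℂ) ≠ 0 := ofReal_ne_zero.2 ht.1.ne'
    refine ((((hasDerivAt_id x).mul_const (t : ℂ)).const_sub 1).clog
      (hslit x hx t (Ioc_subset_Icc_self ht))).div_const (t : ℂ) |>.congr_deriv ?_
    simp only [id]
    field_simp
  have := (intervalIntegral.hasDerivAt_integral_of_dominated_loc_of_deriv_le
    (F := fun (x : ℂ) (t : ℝ) => log (1 - x * t) / t) hK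
    (Eventually.of_forall fun x => (by fun_prop : Measurable _).aestronglyMeasurable)
    (intervalIntegrable_log_one_sub_mul_div hw) (by fun_prop : Measurable _).aestronglyMeasurable
    hbound intervalIntegrable_const hdiff).2.neg
  rwa [intervalIntegral.integral_neg, neg_neg] at this

lemma hasDerivAt_Li2 {w : ℂ} (hw : 1 - w ∈ slitPlane) (hw₀ : w ≠ 0) :
    HasDerivAt Li2 (-log (1 - w) / w) w := by
  convert hasDerivAt_Li2_integral hw using 1
  rw [← log_inv _ (slitPlane_arg_ne_pi hw), log_inv_eq_integral hw, mul_div_cancel_left₀ _ hw₀]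
  simp [real_smul, mul_comm]

lemma hasDerivAt_Li2_neg_exp {y : ℂ} (hy : 1 + cexp y ∈ slitPlane) :
    HasDerivAt (fun y => Li2 (-cexp y)) (-log (1 + cexp y)) y := by
  refine ((hasDerivAt_Li2 (by rwa [sub_neg_eq_add]) (neg_ne_zero.2 (exp_ne_zero y))).comp y
    (Complex.hasDerivAt_exp y).neg).congr_deriv ?_
  rw [sub_neg_eq_add, div_mul_cancel₀ _ (neg_ne_zero.2 (exp_ne_zero y))]

lemma hasDerivAt_pot₁ {a : ℂ} (b c : ℂ) (ha : 1 + cexp a ∈ slitPlane) :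
    HasDerivAt (fun w => pot w b c) (I * (2 * a - b) - π - I * log (1 + cexp a)) a := by
  have hq : HasDerivAt (fun w : ℂ => w ^ 2 - w * b + b * c + c ^ 2 / 2) (2 * a - b) a := by
    simpa using (((hasDerivAt_pow 2 a).sub ((hasDerivAt_id a).mul_const b)).add_const
      (b * c)).add_const (c ^ 2 / 2)
  have hl : HasDerivAt (fun w : ℂ => -(π : ℂ) * w + π * c) (-π) a := by
    simpa using ((hasDerivAt_id a).const_mul (-(π : ℂ))).add_const (π * c)
  refine ((((hq.const_mul I).add hl).add ((hasDerivAt_Li2_neg_exp ha).const_mul I)).sub_const _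
    |>.add_const _).congr_deriv ?_
  ring

lemma hasDerivAt_pot₂ {b : ℂ} (a c : ℂ) (hb : 1 + cexp b ∈ slitPlane) :
    HasDerivAt (fun w => pot a w c) (I * (c - a) + I * log (1 + cexp b)) b := by
  have hq : HasDerivAt (fun w : ℂ => a ^ 2 - a * w + w * c + c ^ 2 / 2) (c - a) b := by
    simpa [sub_eq_neg_add] using ((((hasDerivAt_id b).const_mul a).const_sub (a ^ 2)).add
      ((hasDerivAt_id b).mul_const c)).add_const (c ^ 2 / 2)
  refine ((((hq.const_mul I).add_const _).add_const _).sub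
    ((hasDerivAt_Li2_neg_exp hb).const_mul I) |>.add_const _).congr_deriv ?_
  ring

lemma hasDerivAt_pot₃ {c : ℂ} (a b : ℂ) (hc : 1 + cexp c ∈ slitPlane) :
    HasDerivAt (fun w => pot a b w) (I * (b + c) + π - 3 * I * log (1 + cexp c)) c := by
  have hq : HasDerivAt (fun w : ℂ => a ^ 2 - a * b + b * w + w ^ 2 / 2) (b + c) c := by
    refine (((hasDerivAt_id c).const_mul b).const_add (a ^ 2 - a * b)).add
      ((hasDerivAt_pow 2 c).div_const 2) |>.congr_deriv ?_
    ring
  have hl : HasDerivAt (fun w : ℂ => -(π : ℂ) * a + π * w) π c := by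
    simpa using ((hasDerivAt_id c).const_mul (π : ℂ)).const_add (-(π : ℂ) * a)
  refine ((((hq.const_mul I).add hl).add_const _).sub_const _
    |>.add ((hasDerivAt_Li2_neg_exp hc).const_mul (3 * I))).congr_deriv ?_
  ring

lemma ne_zero_of_im_pos {z : ℂ} (hz : 0 < z.im) : z ≠ 0 := fun h => by simp [h] at hz

lemma arg_mem_Ioo_of_im_pos {z : ℂ} (hz : 0 < z.im) : z.arg ∈ Ioo 0 π :=
  ⟨(arg_nonneg_iff.2 hz.le).lt_of_ne fun h => hz.ne' (arg_eq_zero_iff.1 h.symm).2,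
    arg_lt_pi_iff.2 (Or.inr hz.ne')⟩

lemma one_sub_mem_slitPlane {z : ℂ} (hz : 0 < z.im) : 1 - z ∈ slitPlane :=
  mem_slitPlane_iff.2 (Or.inr (by simpa using hz.ne'))

lemma sub_one_div_self_mem_slitPlane {z : ℂ} (hz : 0 < z.im) : (z - 1) / z ∈ slitPlane := by
  refine mem_slitPlane_iff.2 (Or.inr ?_)
  rw [sub_div, div_self (ne_zero_of_im_pos hz), one_div, sub_im, inv_im]
  have := normSq_pos.2 (ne_zero_of_im_pos hz)
  simp only [one_im, zero_sub, neg_div, neg_neg]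
  positivity

lemma log_one_div_one_sub {z : ℂ} (hz : 0 < z.im) : log (1 / (1 - z)) = -log (1 - z) := by
  rw [one_div, log_inv _ (slitPlane_arg_ne_pi (one_sub_mem_slitPlane hz))]

lemma log_sub_one_div_self {z : ℂ} (hz : 0 < z.im) :
    log ((z - 1) / z) = log (1 - z) - log z + π * I := by
  have hz₀ := ne_zero_of_im_pos hz
  have h₁ := arg_mem_Ioo_of_im_pos hz
  have h₂ : (1 - z).arg ∈ Ioo (-π) 0 := ⟨neg_pi_lt_arg _, arg_neg_iff.2 (by simpa using hz)⟩
  have hexp : cexp (log (1 - z) - log z + π * I) = (z - 1) / z := by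
    rw [Complex.exp_add, Complex.exp_sub, exp_log (slitPlane_ne_zero (one_sub_mem_slitPlane hz)),
      exp_log hz₀, exp_pi_mul_I]
    ring
  rw [← hexp, Complex.log_exp] <;> simp [log_im] <;> linarith [h₁.1, h₁.2, h₂.1, h₂.2]

lemma im_psiP_mem_Ioo {z : ℂ} (hz : 0 < z.im) : (psiP z).im ∈ Ioo (-π) 0 := by
  have := arg_mem_Ioo_of_im_pos hz
  simp only [psiP, sub_im, log_im, mul_im, ofReal_re, I_im, ofReal_im, I_re]
  constructor <;> linarith [this.1, this.2]

lemma im_psiM_mem_Ioo {z : ℂ} (hz : 0 < z.im) : (psiM z).im ∈ Ioo 0 π := by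
  have := arg_mem_Ioo_of_im_pos hz
  simp only [psiM, neg_im, sub_im, log_im, mul_im, ofReal_re, I_im, ofReal_im, I_re]
  constructor <;> linarith [this.1, this.2]

lemma one_add_exp_psiP {z : ℂ} (hz : z ≠ 0) : 1 + cexp (psiP z) = 1 - z := by
  rw [psiP, Complex.exp_sub, exp_log hz, exp_pi_mul_I, div_neg, div_one, ← sub_eq_add_neg]

lemma one_add_exp_psiM {z : ℂ} (hz : z ≠ 0) : 1 + cexp (psiM z) = (z - 1) / z := by
  rw [psiM, Complex.exp_neg, Complex.exp_sub, exp_log hz, exp_pi_mul_I]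
  field_simp
  ring

lemma deriv_pot₁_psi {z₁ : ℂ} (z₂ z₃ : ℂ) (h₁ : 0 < z₁.im) :
    deriv (fun w => pot w (psiM z₂) (psiP z₃)) (psiP z₁) =
      I * (2 * log z₁ + log z₂ - log (1 - z₁) - 2 * π * I) := by
  have h := one_add_exp_psiP (ne_zero_of_im_pos h₁)
  rw [(hasDerivAt_pot₁ _ _ (h ▸ one_sub_mem_slitPlane h₁)).deriv, h]
  simp only [psiP, psiM]
  linear_combination (-π : ℂ) * I_sq

lemma deriv_pot₂_psi {z₂ : ℂ} (z₁ z₃ : ℂ) (h₂ : 0 < z₂.im) :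
    deriv (fun w => pot (psiP z₁) w (psiP z₃)) (psiM z₂) =
      I * (log z₃ - log z₁ + log ((z₂ - 1) / z₂)) := by
  have h := one_add_exp_psiM (ne_zero_of_im_pos h₂)
  rw [(hasDerivAt_pot₂ _ _ (h ▸ sub_one_div_self_mem_slitPlane h₂)).deriv, h]
  simp only [psiP]
  ring

lemma deriv_pot₃_psi {z₃ : ℂ} (z₁ z₂ : ℂ) (h₃ : 0 < z₃.im) :
    deriv (fun w => pot (psiP z₁) (psiM z₂) w) (psiP z₃) =
      I * (log z₃ - log z₂ - 3 * log (1 - z₃) - π * I) := by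
  have h := one_add_exp_psiP (ne_zero_of_im_pos h₃)
  rw [(hasDerivAt_pot₃ _ _ (h ▸ one_sub_mem_slitPlane h₃)).deriv, h]
  simp only [psiP, psiM]
  linear_combination (π : ℂ) * I_sq

/-- for `(z₁,z₂,z₃) ∈ ℍ³`, `ψ(z₁,z₂,z₃) ∈ 𝒰`, and `∇S` vanishes
at `ψ(z₁,z₂,z₃)` iff the equations (E1), (E2), (E3) hold. -/
theorem critical_point_iff_gluing (z₁ z₂ z₃ : ℂ)
    (h₁ : 0 < z₁.im) (h₂ : 0 < z₂.im) (h₃ : 0 < z₃.im) :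
    ((psiP z₁).im ∈ Set.Ioo (-π) 0 ∧ (psiM z₂).im ∈ Set.Ioo 0 π ∧
      (psiP z₃).im ∈ Set.Ioo (-π) 0) ∧
    ((deriv (fun w => pot w (psiM z₂) (psiP z₃)) (psiP z₁) = 0 ∧
      deriv (fun w => pot (psiP z₁) w (psiP z₃)) (psiM z₂) = 0 ∧
      deriv (fun w => pot (psiP z₁) (psiM z₂) w) (psiP z₃) = 0) ↔
     (Complex.log z₃ =
        Complex.log ((z₁ - 1) / z₁) + Complex.log (1 / (1 - z₂)) ∧
      Complex.log z₃ = Complex.log z₁ - Complex.log ((z₂ - 1) / z₂) ∧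
      Complex.log z₁ + Complex.log (1 / (1 - z₂)) +
        3 * Complex.log (1 / (1 - z₃)) = 2 * (π : ℂ) * Complex.I)) := by
  refine ⟨⟨im_psiP_mem_Ioo h₁, im_psiM_mem_Ioo h₂, im_psiP_mem_Ioo h₃⟩, ?_⟩
  simp only [deriv_pot₁_psi z₂ z₃ h₁, deriv_pot₂_psi z₁ z₃ h₂, deriv_pot₃_psi z₁ z₂ h₃,
    mul_eq_zero, I_ne_zero, false_or]
  rw [log_sub_one_div_self h₁, log_sub_one_div_self h₂, log_one_div_one_sub h₂,
    log_one_div_one_sub h₃]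
  constructor
  · rintro ⟨d₁, d₂, d₃⟩
    exact ⟨by linear_combination d₁ + d₂, by linear_combination d₂, by linear_combination d₃ - d₂⟩
  · rintro ⟨e₁, e₂, e₃⟩
    exact ⟨by linear_combination e₁ - e₂, by linear_combination e₂, by linear_combination e₃ + e₂⟩
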